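/- Let m_n := 2·(2n)!·3^n / ((n+2)!·n!) for n ∈ ℕ. Then lim_{n→∞} m_n · n^{5/2} · 12^{−n} = 2/√π. -/

import Mathlib

open Nat Filter Real Topology Stirling

/-!
Since `(2n)! = C(2n,n) · n!²`, Tutte's number is `mₙ = 2 · 3ⁿ · C(2n,n) / ((n+1)(n+2))`, so
`mₙ · n^{5/2} · 12^{-n}` is `2n² / ((n+1)(n+2)) → 2` times `C(2n,n) · √n / 4ⁿ`. In terms of the
Stirling sequence `sₙ = n! / (√(2n) (n/e)ⁿ)` the latter is exactly `s₂ₙ / sₙ²`, which tends to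
`√π / π = 1 / √π` by Stirling's formula.
-/

theorem Nat.centralBinom_mul_factorial_mul_factorial (n : ℕ) :
    centralBinom n * n ! * n ! = (2 * n)! := by
  rw [centralBinom_eq_two_mul_choose]
  simpa [two_mul] using choose_mul_factorial_mul_factorial (show n ≤ 2 * n by omega)

theorem centralBinom_mul_sqrt_div_four_pow_eq_stirlingSeq (n : ℕ) :
    (centralBinom n : ℝ) * √n / 4 ^ n = stirlingSeq (2 * n) / stirlingSeq n ^ 2 := by
  rcases eq_or_ne n 0 with rfl | hn
  · simp
  have hsqrt : √(2 * ((2 * n : ℕ) : ℝ)) = 2 * √n := by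
    rw [show 2 * ((2 * n : ℕ) : ℝ) = 2 ^ 2 * n by push_cast; ring, sqrt_mul (by positivity),
      sqrt_sq zero_le_two]
  have hpow : (((2 * n : ℕ) : ℝ) / exp 1) ^ (2 * n) = 4 ^ n * ((n / exp 1) ^ n) ^ 2 := by
    rw [cast_mul, cast_two, mul_div_assoc, mul_pow, pow_mul (2 : ℝ)]
    norm_num
    ring
  simp only [stirlingSeq, hsqrt, hpow, ← Nat.centralBinom_mul_factorial_mul_factorial]
  have hn_pos : (0 : ℝ) < n := by positivity
  field_simp
  push_cast
  rw [sq_sqrt, sq_sqrt] <;> try positivity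
  ring

theorem tendsto_centralBinom_mul_sqrt_div_four_pow :
    Tendsto (fun n : ℕ => (centralBinom n : ℝ) * √n / 4 ^ n) atTop (𝓝 (1 / √π)) := by
  have hπ : √π ≠ 0 := (sqrt_pos.mpr pi_pos).ne'
  have h := (tendsto_stirlingSeq_sqrt_pi.comp (tendsto_id.const_mul_atTop' two_pos)).div
    (tendsto_stirlingSeq_sqrt_pi.pow 2) (pow_ne_zero 2 hπ)
  convert h using 2 with n
  · exact centralBinom_mul_sqrt_div_four_pow_eq_stirlingSeq n
  · field_simp

theorem tutte_formula_eq_centralBinom (n : ℕ) :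
    (2 * (2 * n)! * 3 ^ n / ((n + 2)! * n !) : ℝ)
      = 2 * 3 ^ n * centralBinom n / ((n + 1) * (n + 2)) := by
  rw [← Nat.centralBinom_mul_factorial_mul_factorial, factorial_succ, factorial_succ]
  push_cast
  field_simp
  ring

theorem tutte_formula_mul_rpow_div_twelve_pow_eq (n : ℕ) :
    (2 * (2 * n)! * 3 ^ n / ((n + 2)! * n !) : ℝ) * (n : ℝ) ^ ((5 : ℝ) / 2) * 12 ^ (-(n : ℝ))
      = 2 * (n / (n + 1)) * (n / (n + 2)) * ((centralBinom n : ℝ) * √n / 4 ^ n) := by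
  have h52 : (n : ℝ) ^ ((5 : ℝ) / 2) = √n ^ 5 := by
    rw [rpow_div_two_eq_sqrt _ n.cast_nonneg]
    norm_cast
  have h12 : (12 : ℝ) ^ (-(n : ℝ)) = ((4 : ℝ) ^ n * 3 ^ n)⁻¹ := by
    rw [rpow_neg (by norm_num), rpow_natCast, ← mul_pow]
    norm_num
  rw [tutte_formula_eq_centralBinom, h52, h12]
  field_simp
  rw [show √n ^ 5 = (√n ^ 2) ^ 2 * √n by ring, sq_sqrt n.cast_nonneg]
  ring

theorem tutte_asymptotics :
    Filter.Tendsto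
      (fun n : ℕ =>
        (2 * (2 * n)! * 3 ^ n / ((n + 2)! * n !) : ℝ)
          * (n : ℝ) ^ ((5 : ℝ) / 2) * (12 : ℝ) ^ (-(n : ℝ)))
      Filter.atTop (nhds (2 / Real.sqrt π)) := by
  have hrat : Tendsto (fun n : ℕ => 2 * ((n : ℝ) / (n + 1)) * (n / (n + 2))) atTop (𝓝 2) := by
    simpa using ((tendsto_natCast_div_add_atTop (1 : ℝ)).const_mul 2).mul
      (tendsto_natCast_div_add_atTop (2 : ℝ))
  convert hrat.mul tendsto_centralBinom_mul_sqrt_div_four_pow using 2 with n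
  · exact tutte_formula_mul_rpow_div_twelve_pow_eq n
  · rw [mul_one_div]
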